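/- Let H be a Hopf algebra and B an algebra. Suppose τ, τ' : H → B are mutual convolution inverses with τ(1) = τ'(1) = 1. Then for the maps A ↦ A^τ with A^τ(h) = Σ τ'(h₁)A(h₂)τ(h₃) + Σ τ'(h₁)dτ(h₂) acting on linear maps A : H → Γ¹(B) with A(1)=0, one has (A^τ)^{τ'} = A; i.e., the gauge transformation of connection forms by τ is inverted by the gauge transformation by the convolution inverse τ'. -/

import Mathlib

/-!
Leibniz's rule says exactly that `b ↦ (b, d b)` is an algebra map into the square-zero extension
`B ⊕ Γ`. In the convolution algebra of `k`-linear maps `H → B ⊕ Γ`, write `t, t'` for the images of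
`τ, τ'` and `δ, δ'` for those of `dτ, dτ'`; the gauge transform by `τ` becomes `a ↦ t' (a t + δ)`.
Since `τ * τ' = ε` we get `t t' = 1` and, applying the algebra map above and using that products of
two `Γ`-valued maps vanish, `δ t' + t δ' = 0`. Hence the composite transform is
`t t' a t t' + (δ t' + t δ') = a`.
-/

set_option linter.unusedSectionVars false

open TensorProduct

variable {k : Type*} [Field k]
variable {H : Type*} [Ring H] [HopfAlgebra k H]
variable {B : Type*} [Ring B] [Algebra k B]
variable {Γ : Type*} [AddCommGroup Γ] [Module k Γ]
  [Module B Γ] [Module Bᵐᵒᵖ Γ]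
  [IsScalarTower k B Γ] [IsScalarTower k Bᵐᵒᵖ Γ]
  [SMulCommClass k B Γ] [SMulCommClass k Bᵐᵒᵖ Γ]
  [SMulCommClass B Bᵐᵒᵖ Γ]

noncomputable def conv (f g : H →ₗ[k] B) : H →ₗ[k] B :=
  LinearMap.mul' k B ∘ₗ TensorProduct.map f g ∘ₗ Coalgebra.comul

noncomputable def convUnit : H →ₗ[k] B :=
  Algebra.linearMap k B ∘ₗ Coalgebra.counit

/-- Left action of `B` on the bimodule `Γ`, as a `k`-bilinear map. -/
noncomputable def lact : B →ₗ[k] Γ →ₗ[k] Γ :=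
  LinearMap.mk₂ k (fun b v => b • v)
    (fun b₁ b₂ v => add_smul b₁ b₂ v)
    (fun c b v => smul_assoc c b v)
    (fun b v₁ v₂ => smul_add b v₁ v₂)
    (fun c b v => (smul_comm c b v).symm)

/-- Right action of `B` on the bimodule `Γ`, as a `k`-bilinear map. -/
noncomputable def ract : B →ₗ[k] Γ →ₗ[k] Γ :=
  LinearMap.mk₂ k (fun b v => MulOpposite.op b • v)
    (fun b₁ b₂ v => by simp [add_smul])
    (fun c b v => by simp [MulOpposite.op_smul, smul_assoc])
    (fun b v₁ v₂ => smul_add _ v₁ v₂)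
    (fun c b v => (smul_comm c _ v).symm)

/-- The gauge transform of a connection form:
`A'(h) = Σ τ'(h₁)·A(h₂)·τ(h₃) + Σ τ'(h₁)·dτ(h₂)`. -/
noncomputable def gaugeA (d : B →ₗ[k] Γ) (τ τ' : H →ₗ[k] B)
    (A : H →ₗ[k] Γ) : H →ₗ[k] Γ :=
  (TensorProduct.lift (lact (B := B) (Γ := Γ)) ∘ₗ
    TensorProduct.map τ'
      (TensorProduct.lift ((ract (B := B) (Γ := Γ)).flip) ∘ₗ
        TensorProduct.map A τ ∘ₗ (Coalgebra.comul : H →ₗ[k] H ⊗[k] H)) ∘ₗ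
    (Coalgebra.comul : H →ₗ[k] H ⊗[k] H)) +
  (TensorProduct.lift (lact (B := B) (Γ := Γ)) ∘ₗ
    TensorProduct.map τ' (d ∘ₗ τ) ∘ₗ (Coalgebra.comul : H →ₗ[k] H ⊗[k] H))

lemma mul_mul_add_mul_add_eq {R : Type*} [Ring R] {t t' δ δ' : R} (h : t * t' = 1)
    (hδ : δ * t' + t * δ' = 0) (a : R) : t * (t' * (a * t + δ) * t' + δ') = a :=
  calc t * (t' * (a * t + δ) * t' + δ')
      = t * t' * (a * t + δ) * t' + t * δ' := by rw [mul_add, mul_assoc, mul_assoc, mul_assoc]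
    _ = a * (t * t') + (δ * t' + t * δ') := by
      rw [h, one_mul, add_mul, mul_assoc, add_assoc, h]
    _ = a := by rw [h, hδ, mul_one, add_zero]

open TrivSqZeroExt WithConv

section SquareZeroExtension

variable {C : Type*} [AddCommMonoid C] [Module k C] [CoalgebraStruct k C]

noncomputable def inrLinearMap : Γ →ₗ[k] TrivSqZeroExt B Γ where
  toFun := inr
  map_add' := inr_add B
  map_smul' := inr_smul B

variable (Γ) in
noncomputable def convInl (f : C →ₗ[k] B) : WithConv (C →ₗ[k] TrivSqZeroExt B Γ) :=
  toConv ((inlAlgHom k B Γ).toLinearMap ∘ₗ f)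

noncomputable def convInr (M : C →ₗ[k] Γ) : WithConv (C →ₗ[k] TrivSqZeroExt B Γ) :=
  toConv ((inrLinearMap : Γ →ₗ[k] TrivSqZeroExt B Γ) ∘ₗ M)

lemma convInr_injective :
    Function.Injective (convInr : (C →ₗ[k] Γ) → WithConv (C →ₗ[k] TrivSqZeroExt B Γ)) := by
  intro M N h
  ext c
  exact inr_injective (LinearMap.congr_fun (congrArg ofConv h) c)

lemma convInr_add (M N : C →ₗ[k] Γ) :
    (convInr (M + N) : WithConv (C →ₗ[k] TrivSqZeroExt B Γ)) = convInr M + convInr N := by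
  simp only [convInr, LinearMap.comp_add, toConv_add]

lemma convInr_mul_convInr (M N : C →ₗ[k] Γ) :
    (convInr M * convInr N : WithConv (C →ₗ[k] TrivSqZeroExt B Γ)) = 0 := by
  rw [LinearMap.convMul_def, convInr, convInr, ← toConv_zero,
    ← LinearMap.zero_comp CoalgebraStruct.comul, ← LinearMap.comp_assoc]
  congr 2
  apply TensorProduct.ext'
  intro x y
  simp [inrLinearMap, inr_mul_inr]

lemma convInr_lift_lact (f : C →ₗ[k] B) (M : C →ₗ[k] Γ) :
    convInr (TensorProduct.lift lact ∘ₗ TensorProduct.map f M ∘ₗ Coalgebra.comul) =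
      convInl Γ f * convInr M := by
  rw [LinearMap.convMul_def, convInr, convInr, convInl]
  congr 1
  simp only [← LinearMap.comp_assoc]
  congr 1
  apply TensorProduct.ext'
  intro x y
  simp [inrLinearMap, inl_mul_inr, lact]

lemma convInr_lift_ract_flip (M : C →ₗ[k] Γ) (f : C →ₗ[k] B) :
    convInr (TensorProduct.lift ract.flip ∘ₗ TensorProduct.map M f ∘ₗ Coalgebra.comul) =
      convInr M * convInl Γ f := by
  rw [LinearMap.convMul_def, convInr, convInr, convInl]
  congr 1
  simp only [← LinearMap.comp_assoc]
  congr 1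
  apply TensorProduct.ext'
  intro x y
  simp [inrLinearMap, inr_mul_inl, ract]

end SquareZeroExtension

section AlgHom

variable {E : Type*} [Semiring E] [Algebra k E] (ψ : B →ₐ[k] E)

lemma toConv_algHom_comp_conv (f g : H →ₗ[k] B) :
    toConv (ψ.toLinearMap ∘ₗ conv f g) =
      toConv (ψ.toLinearMap ∘ₗ f) * toConv (ψ.toLinearMap ∘ₗ g) :=
  congrArg toConv (LinearMap.algHom_comp_convMul_distrib ψ (toConv f) (toConv g))

lemma toConv_algHom_comp_convUnit : toConv (ψ.toLinearMap ∘ₗ (convUnit : H →ₗ[k] B)) = 1 := by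
  rw [LinearMap.convOne_def, convUnit, ← LinearMap.comp_assoc]
  congr 2
  exact LinearMap.ext ψ.commutes

end AlgHom

lemma convInl_mul_convInl_of_conv_eq_convUnit {τ τ' : H →ₗ[k] B} (h : conv τ τ' = convUnit) :
    convInl Γ τ * convInl Γ τ' = 1 := by
  rw [convInl, convInl, ← toConv_algHom_comp_conv, h]
  exact toConv_algHom_comp_convUnit _

noncomputable def derivationAlgHom (d : B →ₗ[k] Γ) (hd1 : d 1 = 0)
    (hLeibniz : ∀ a b : B, d (a * b) = MulOpposite.op b • d a + a • d b) :
    B →ₐ[k] TrivSqZeroExt B Γ :=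
  AlgHom.ofLinearMap ((inlAlgHom k B Γ).toLinearMap + inrLinearMap ∘ₗ d)
    (by simp [inrLinearMap, hd1])
    (fun a b => by ext <;> simp [inrLinearMap, hLeibniz, add_comm])

lemma toConv_derivationAlgHom_comp (d : B →ₗ[k] Γ) (hd1 : d 1 = 0)
    (hLeibniz : ∀ a b : B, d (a * b) = MulOpposite.op b • d a + a • d b) (f : H →ₗ[k] B) :
    toConv ((derivationAlgHom d hd1 hLeibniz).toLinearMap ∘ₗ f) =
      convInl Γ f + convInr (d ∘ₗ f) :=
  rfl

lemma convInr_comp_mul_add_mul_convInr_comp_eq_zero (d : B →ₗ[k] Γ) (hd1 : d 1 = 0)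
    (hLeibniz : ∀ a b : B, d (a * b) = MulOpposite.op b • d a + a • d b) (τ τ' : H →ₗ[k] B)
    (h : conv τ τ' = convUnit) :
    convInr (d ∘ₗ τ) * convInl Γ τ' + convInl Γ τ * convInr (d ∘ₗ τ') = 0 := by
  have hφ := toConv_algHom_comp_conv (derivationAlgHom d hd1 hLeibniz) τ τ'
  rw [h, toConv_algHom_comp_convUnit, toConv_derivationAlgHom_comp,
    toConv_derivationAlgHom_comp] at hφ
  rw [mul_add, add_mul, add_mul, convInr_mul_convInr, add_zero,
    convInl_mul_convInl_of_conv_eq_convUnit h, add_assoc] at hφ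
  exact left_eq_add.mp hφ

lemma convInr_gaugeA (d : B →ₗ[k] Γ) (τ τ' : H →ₗ[k] B) (A : H →ₗ[k] Γ) :
    convInr (gaugeA d τ τ' A) = convInl Γ τ' * (convInr A * convInl Γ τ + convInr (d ∘ₗ τ)) := by
  rw [gaugeA, convInr_add, convInr_lift_lact, convInr_lift_ract_flip, convInr_lift_lact, mul_add]

theorem statement_18_general (d : B →ₗ[k] Γ)
    (hd1 : d 1 = 0)
    (hLeibniz : ∀ a b : B, d (a * b) = MulOpposite.op b • d a + a • d b)
    (τ τ' : H →ₗ[k] B)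
    (hττ' : conv τ' τ = (convUnit : H →ₗ[k] B) ∧ conv τ τ' = (convUnit : H →ₗ[k] B))
    (A : H →ₗ[k] Γ) :
    gaugeA d τ' τ (gaugeA d τ τ' A) = A := by
  apply convInr_injective (B := B)
  rw [convInr_gaugeA, convInr_gaugeA]
  exact mul_mul_add_mul_add_eq (convInl_mul_convInl_of_conv_eq_convUnit hττ'.2)
    (convInr_comp_mul_add_mul_convInr_comp_eq_zero d hd1 hLeibniz τ τ' hττ'.2) _

/-- The gauge transformation of connection forms by `τ` is inverted by the gauge
transformation by its convolution inverse `τ'`: `(A^τ)^{τ'} = A`. -/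
theorem statement_18 (d : B →ₗ[k] Γ)
    (hd1 : d 1 = 0)
    (hLeibniz : ∀ a b : B, d (a * b) = MulOpposite.op b • d a + a • d b)
    (τ τ' : H →ₗ[k] B) (hτ1 : τ 1 = 1) (hτ'1 : τ' 1 = 1)
    (hττ' : conv τ' τ = (convUnit : H →ₗ[k] B) ∧ conv τ τ' = (convUnit : H →ₗ[k] B))
    (A : H →ₗ[k] Γ) (hA1 : A 1 = 0) :
    gaugeA d τ' τ (gaugeA d τ τ' A) = A :=
  statement_18_general d hd1 hLeibniz τ τ' hττ' A
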